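/- arXiv:2207.14490 — 2 statements merged into one kernel-verified Lean document; each statement's English description precedes it below -/
import Mathlib

section
/- Let f : (Fin p → ℝ) → ℝ be a model of the form f(x) = g(x_j) for some g : ℝ → ℝ and fixed j ∈ Fin p, let x^(1), …, x^(n) : Fin p → ℝ (n ≥ 1) be a background dataset, and let x : Fin p → ℝ. Then the interventional SHAP value of feature j at x equals g(x_j) − (1/n) Σ_{i=1}^n g(x^(i)_j). -/
/-- The Shapley value of player `j` for the value function `v`. -/
noncomputable def shapley {p : ℕ} (v : Finset (Fin p) → ℝ) (j : Fin p) : ℝ :=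
  ∑ S ∈ (Finset.univ.erase j).powerset,
    (((S.card.factorial * (p - S.card - 1).factorial : ℕ) : ℝ) / (p.factorial : ℝ)) *
      (v (S ∪ {j}) - v S)

/-- The interventional contribution function of the model `f` at point `x`, with
background dataset `X 1, …, X n`: coordinates in `S` are taken from `x`, the
remaining ones from the background observations. -/
noncomputable def interv {p n : ℕ} (f : (Fin p → ℝ) → ℝ) (X : Fin n → Fin p → ℝ)
    (x : Fin p → ℝ) (S : Finset (Fin p)) : ℝ :=
  (1 / n : ℝ) * ∑ i : Fin n, f (S.piecewise x (X i))

/-! Only feature `j` matters to `f`, so the interventional value of a coalition is `g (x j)` when it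
contains `j` and the background mean of `g (X i j)` otherwise. The marginal contribution of `j` is
therefore the same for every coalition, and the Shapley weights sum to one. -/

open Finset Nat

theorem Finset.sum_powerset_factorial_mul_factorial {α : Type*} (s : Finset α) :
    ∑ S ∈ s.powerset, S.card ! * (s.card - S.card)! = (s.card + 1)! := by
  rw [sum_powerset_apply_card (fun k => k ! * (s.card - k)!)]
  calc ∑ k ∈ range (s.card + 1), s.card.choose k • (k ! * (s.card - k)!)
      = ∑ _k ∈ range (s.card + 1), s.card ! := by
        refine sum_congr rfl fun k hk => ?_
        rw [smul_eq_mul, ← mul_assoc,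
          choose_mul_factorial_mul_factorial (Nat.lt_succ_iff.mp (mem_range.mp hk))]
    _ = (s.card + 1)! := by rw [sum_const, card_range, smul_eq_mul, factorial_succ]

theorem shapley_weights_sum_eq_one {p : ℕ} (j : Fin p) :
    ∑ S ∈ (univ.erase j).powerset,
      (((S.card ! * (p - S.card - 1)! : ℕ) : ℝ) / (p ! : ℝ)) = 1 := by
  have hcard : (univ.erase j).card + 1 = p := by
    rw [card_erase_of_mem (mem_univ j), Finset.card_univ, Fintype.card_fin]
    exact Nat.sub_add_cancel j.pos
  rw [← sum_div, ← Nat.cast_sum, div_eq_one_iff_eq (by positivity), Nat.cast_inj]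
  calc ∑ S ∈ (univ.erase j).powerset, S.card ! * (p - S.card - 1)!
      = ∑ S ∈ (univ.erase j).powerset, S.card ! * ((univ.erase j).card - S.card)! :=
        sum_congr rfl fun S _ => by rw [show p - S.card - 1 = (univ.erase j).card - S.card by omega]
    _ = p ! := by rw [sum_powerset_factorial_mul_factorial, hcard]

theorem shapley_eq_of_marginal_eq {p : ℕ} {v : Finset (Fin p) → ℝ} {j : Fin p} {c : ℝ}
    (hv : ∀ S, j ∉ S → v (S ∪ {j}) - v S = c) : shapley v j = c := by
  have hmarg : ∀ S ∈ (univ.erase j).powerset, v (S ∪ {j}) - v S = c := fun S hS =>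
    hv S fun hj => (mem_erase.mp (mem_powerset.mp hS hj)).1 rfl
  rw [shapley, sum_congr rfl fun S hS => by rw [hmarg S hS], ← sum_mul,
    shapley_weights_sum_eq_one, one_mul]

section Univariable

variable {p n : ℕ} (g : ℝ → ℝ) (j : Fin p) (X : Fin n → Fin p → ℝ) (x : Fin p → ℝ)

theorem interv_comp_eval_of_mem (hn : n ≠ 0) {S : Finset (Fin p)} (hj : j ∈ S) :
    interv (fun y => g (y j)) X x S = g (x j) := by
  simp only [interv, piecewise_eq_of_mem _ _ _ hj, sum_const, Finset.card_univ, Fintype.card_fin,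
    nsmul_eq_mul]
  field_simp

theorem interv_comp_eval_of_notMem {S : Finset (Fin p)} (hj : j ∉ S) :
    interv (fun y => g (y j)) X x S = (1 / n : ℝ) * ∑ i : Fin n, g (X i j) := by
  simp only [interv, piecewise_eq_of_notMem _ _ _ hj]

end Univariable

/-- if `f x = g (x j)` for some `g : ℝ → ℝ` and fixed `j`, then the
interventional SHAP value of feature `j` at `x` equals
`g (x j) - (1/n) Σ_i g (X i j)`. -/
theorem interventional_shap_univariable {p n : ℕ} (hn : 1 ≤ n)
    (f : (Fin p → ℝ) → ℝ) (g : ℝ → ℝ) (j : Fin p)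
    (hf : ∀ x : Fin p → ℝ, f x = g (x j))
    (X : Fin n → Fin p → ℝ) (x : Fin p → ℝ) :
    shapley (interv f X x) j = g (x j) - (1 / n : ℝ) * ∑ i : Fin n, g (X i j) := by
  obtain rfl : f = fun y => g (y j) := funext hf
  refine shapley_eq_of_marginal_eq fun S hj => ?_
  rw [interv_comp_eval_of_mem g j X x (by omega) (mem_union_right S (mem_singleton_self j)),
    interv_comp_eval_of_notMem g j X x hj]
end

section
/- Equal feature values yield equal SHAP values for additive features: if f : (Fin p → ℝ) → ℝ is additive in coordinate j' and x, y : Fin p → ℝ are two points with x_{j'} = y_{j'}, then the interventional SHAP values of feature j' (with respect to any common background dataset x^(1), …, x^(n) with n ≥ 1) satisfy φ_{j'}(v_x) = φ_{j'}(v_y). -/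
/-- `f` does not depend on coordinate `j`: `f x = f y` whenever `x k = y k` for all `k ≠ j`. -/
def NotDependsOn {p : ℕ} (f : (Fin p → ℝ) → ℝ) (j : Fin p) : Prop :=
  ∀ x y : Fin p → ℝ, (∀ k : Fin p, k ≠ j → x k = y k) → f x = f y

theorem shapley_congr_of_marginal {p : ℕ} {v w : Finset (Fin p) → ℝ} {j : Fin p}
    (h : ∀ S, j ∉ S → v (S ∪ {j}) - v S = w (S ∪ {j}) - w S) :
    shapley v j = shapley w j := by
  refine Finset.sum_congr rfl fun S hS => ?_
  have hj : j ∉ S := fun hjS => (Finset.mem_erase.mp (Finset.mem_powerset.mp hS hjS)).1 rfl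
  rw [h S hj]

theorem NotDependsOn.apply_update {p : ℕ} {r : (Fin p → ℝ) → ℝ} {j : Fin p}
    (hr : NotDependsOn r j) (z : Fin p → ℝ) (a : ℝ) : r (Function.update z j a) = r z :=
  hr _ _ fun _ hk => Function.update_of_ne hk _ _

theorem apply_update_sub_of_additive {p : ℕ} {f : (Fin p → ℝ) → ℝ} {g : ℝ → ℝ}
    {r : (Fin p → ℝ) → ℝ} {j : Fin p} (hr : NotDependsOn r j)
    (hf : ∀ x : Fin p → ℝ, f x = g (x j) + r x) (z : Fin p → ℝ) (a : ℝ) :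
    f (Function.update z j a) - f z = g a - g (z j) := by
  rw [hf, hf, hr.apply_update, Function.update_self]
  ring

theorem interv_union_singleton_sub_of_additive {p n : ℕ} {f : (Fin p → ℝ) → ℝ} {g : ℝ → ℝ}
    {r : (Fin p → ℝ) → ℝ} {j : Fin p} (hr : NotDependsOn r j)
    (hf : ∀ x : Fin p → ℝ, f x = g (x j) + r x) (X : Fin n → Fin p → ℝ) (x : Fin p → ℝ)
    {S : Finset (Fin p)} (hj : j ∉ S) :
    interv f X x (S ∪ {j}) - interv f X x S = (1 / n : ℝ) * ∑ i, (g (x j) - g (X i j)) := by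
  unfold interv
  rw [← mul_sub, ← Finset.sum_sub_distrib]
  congr 1
  refine Finset.sum_congr rfl fun i _ => ?_
  rw [Finset.union_singleton, Finset.piecewise_insert, apply_update_sub_of_additive hr hf,
    Finset.piecewise_eq_of_notMem _ _ _ hj]

theorem interventional_shap_congr_of_additive_general {p n : ℕ}
    (f : (Fin p → ℝ) → ℝ) (g : ℝ → ℝ) (r : (Fin p → ℝ) → ℝ) (j' : Fin p)
    (hr : NotDependsOn r j') (hf : ∀ x : Fin p → ℝ, f x = g (x j') + r x)
    (X : Fin n → Fin p → ℝ) (x y : Fin p → ℝ) (hxy : x j' = y j') :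
    shapley (interv f X x) j' = shapley (interv f X y) j' :=
  shapley_congr_of_marginal fun _ hj => by
    rw [interv_union_singleton_sub_of_additive hr hf X x hj,
      interv_union_singleton_sub_of_additive hr hf X y hj, hxy]

/-- if `f` is additive in coordinate `j'` and `x, y` are two points with
`x j' = y j'`, then the interventional SHAP values of feature `j'` (with respect to any
common background dataset of size `n ≥ 1`) coincide: `φ_{j'}(v_x) = φ_{j'}(v_y)`. -/
theorem interventional_shap_congr_of_additive {p n : ℕ} (hn : 1 ≤ n)
    (f : (Fin p → ℝ) → ℝ) (g : ℝ → ℝ) (r : (Fin p → ℝ) → ℝ) (j' : Fin p)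
    (hr : NotDependsOn r j') (hf : ∀ x : Fin p → ℝ, f x = g (x j') + r x)
    (X : Fin n → Fin p → ℝ) (x y : Fin p → ℝ) (hxy : x j' = y j') :
    shapley (interv f X x) j' = shapley (interv f X y) j' :=
  interventional_shap_congr_of_additive_general f g r j' hr hf X x y hxy
end
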